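/- arXiv:gr-qc/0505097 — 3 statements merged into one kernel-verified Lean document; each statement's English description precedes it below -/
import Mathlib

section
/- Let I ⊂ ℝ be open, y₀ ∈ I, and c : I → ℝ continuous with c(y₀) = 0 and c(y) ≠ 0 for y ≠ y₀. Consider the ℤ-action on M = I × ℝ given by n·(y,p) = (y, p + n c(y)). Then the quotient space M/ℤ is not Hausdorff: the images of (y₀, p₁) and (y₀, p₂) with p₁ ≠ p₂ do not have disjoint neighbourhoods. -/
open Set Real

/-!
Fibres over `y ≠ y₀` near `y₀` are orbits of translation by `c y`, and `c y → 0`. Rounding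
`(p₂ - p₁) / c y` gives an orbit point of `(y, p₁)` within `|c y| / 2` of `p₂`, so along
`y → y₀` the saturated set `U` contains points converging to `(y₀, p₂)`, which eventually
lie in `V`.
-/

open Filter Topology

theorem abs_add_round_div_mul_sub_le {t : ℝ} (ht : t ≠ 0) (p q : ℝ) :
    |p + round ((q - p) / t) * t - q| ≤ |t| / 2 := by
  have h : p + round ((q - p) / t) * t - q = -((q - p) / t - round ((q - p) / t)) * t := by
    field_simp
    ring
  rw [h, abs_mul, abs_neg]
  calc |(q - p) / t - round ((q - p) / t)| * |t| ≤ 1 / 2 * |t| :=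
        mul_le_mul_of_nonneg_right (abs_sub_round _) (abs_nonneg t)
    _ = |t| / 2 := by ring

theorem exists_tendsto_add_int_mul {α : Type*} {l : Filter α} {c : α → ℝ}
    (hc : Tendsto c l (𝓝 0)) (hne : ∀ᶠ y in l, c y ≠ 0) (p q : ℝ) :
    ∃ n : α → ℤ, Tendsto (fun y ↦ p + n y * c y) l (𝓝 q) := by
  refine ⟨fun y ↦ round ((q - p) / c y), tendsto_iff_norm_sub_tendsto_zero.mpr ?_⟩
  refine squeeze_zero' (Eventually.of_forall fun _ ↦ norm_nonneg _) ?_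
    (by simpa using hc.norm.div_const 2)
  filter_upwards [hne] with y hy using abs_add_round_div_mul_sub_le hy p q

theorem stmt5_general (I : Set ℝ) (y₀ : ℝ)
    (c : ℝ → ℝ) (hc : ContinuousOn c I) (hc0 : c y₀ = 0)
    (hcne : ∀ y ∈ I, y ≠ y₀ → c y ≠ 0)
    (p₁ p₂ : ℝ) :
    ∀ U V : Set (ℝ × ℝ), IsOpen U → IsOpen V →
      U ⊆ I ×ˢ (univ : Set ℝ) → V ⊆ I ×ˢ (univ : Set ℝ) →
      (∀ z ∈ U, ∀ n : ℤ, ((z : ℝ × ℝ).1, z.2 + n * c z.1) ∈ U) →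
      (∀ z ∈ V, ∀ n : ℤ, ((z : ℝ × ℝ).1, z.2 + n * c z.1) ∈ V) →
      (y₀, p₁) ∈ U → (y₀, p₂) ∈ V → (U ∩ V).Nonempty := by
  intro U V hU hV hUI _ hUsat _ h₁ h₂
  have hslice : ∀ᶠ y in 𝓝 y₀, (y, p₁) ∈ U :=
    (continuous_id.prodMk continuous_const).continuousAt.preimage_mem_nhds (hU.mem_nhds h₁)
  have hI : I ∈ 𝓝 y₀ := mem_of_superset hslice fun y hy ↦ (hUI hy).1
  have hc_lim : Tendsto c (𝓝[≠] y₀) (𝓝 0) :=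
    hc0 ▸ (hc.continuousAt hI).tendsto.mono_left nhdsWithin_le_nhds
  have hc_ne : ∀ᶠ y in 𝓝[≠] y₀, c y ≠ 0 := by
    filter_upwards [nhdsWithin_le_nhds hI, self_mem_nhdsWithin] with y hyI hy
      using hcne y hyI hy
  obtain ⟨n, hn⟩ := exists_tendsto_add_int_mul hc_lim hc_ne p₁ p₂
  have hV_ev : ∀ᶠ y in 𝓝[≠] y₀, (y, p₁ + n y * c y) ∈ V :=
    ((tendsto_nhdsWithin_of_tendsto_nhds tendsto_id).prodMk_nhds hn).eventually
      (hV.mem_nhds h₂)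
  obtain ⟨y, hyU, hyV⟩ := ((eventually_nhdsWithin_of_eventually_nhds hslice).and hV_ev).exists
  exact ⟨_, hUsat _ hyU (n y), hyV⟩

/-- Non-Hausdorffness of the quotient of `M = I × ℝ` by the `ℤ`-action
`n·(y,p) = (y, p + n c(y))`, where `c` is continuous on the open set `I`, vanishes
exactly at `y₀ ∈ I`: the images in the quotient of `(y₀,p₁)` and `(y₀,p₂)` with
`p₁ ≠ p₂` cannot be separated, i.e. any two open saturated sets containing them
respectively must intersect. -/
theorem stmt5 (I : Set ℝ) (hI : IsOpen I) (y₀ : ℝ) (hy₀ : y₀ ∈ I)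
    (c : ℝ → ℝ) (hc : ContinuousOn c I) (hc0 : c y₀ = 0)
    (hcne : ∀ y ∈ I, y ≠ y₀ → c y ≠ 0)
    (p₁ p₂ : ℝ) (hp : p₁ ≠ p₂) :
    ∀ U V : Set (ℝ × ℝ), IsOpen U → IsOpen V →
      U ⊆ I ×ˢ (univ : Set ℝ) → V ⊆ I ×ˢ (univ : Set ℝ) →
      (∀ z ∈ U, ∀ n : ℤ, ((z : ℝ × ℝ).1, z.2 + n * c z.1) ∈ U) →
      (∀ z ∈ V, ∀ n : ℤ, ((z : ℝ × ℝ).1, z.2 + n * c z.1) ∈ V) →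
      (y₀, p₁) ∈ U → (y₀, p₂) ∈ V → (U ∩ V).Nonempty :=
  stmt5_general I y₀ c hc hc0 hcne p₁ p₂
end

section
/- Let R : ℝ → ℝ be smooth, y₀ a point with R(y₀) = c, R'(y₀) = ... = R^{(p−1)}(y₀) = 0 and R^{(p)}(y₀) ≠ 0 for some odd p ≥ 1. Then for s in a punctured neighbourhood of 0 the equation R(y) = c + s has a unique solution y(s) near y₀, and the function φ(s) := G(y(s))/|R'(y(s))|, for G smooth, has the asymptotic behaviour φ(s) = (p!)^{1/p} G(y₀) / (p · |R^{(p)}(y₀)|^{1/p}) · s^{1/p − 1} · (1 + o(1)) as s → 0, where s^{1/p} denotes the real p-th root. -/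
open Set Real Filter Topology

private lemma idw_eq_id {f : ℝ → ℝ} (hf : ContDiff ℝ (⊤ : ℕ∞) f) {s : Set ℝ}
    (hs : UniqueDiffOn ℝ s) {x : ℝ} (hx : x ∈ s) (n : ℕ) :
    iteratedDerivWithin n f s x = iteratedDeriv n f x := by
  have h := (hf.contDiffOn (s := univ)).ftaylorSeriesWithin uniqueDiffOn_univ
  have h2 := (h.mono (subset_univ s)).eq_iteratedFDerivWithin_of_uniqueDiffOn
    (m := n) (by exact_mod_cast le_top) hs hx
  rw [iteratedDerivWithin_eq_iteratedFDerivWithin, iteratedDeriv_eq_iteratedFDeriv, ← h2]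
  simp [ftaylorSeriesWithin, iteratedFDerivWithin_univ]

private lemma taylor_ratio_right {f : ℝ → ℝ} (hf : ContDiff ℝ (⊤ : ℕ∞) f) (y₀ : ℝ) (p : ℕ)
    (hp1 : 1 ≤ p) (hder : ∀ k, 1 ≤ k → k < p → iteratedDeriv k f y₀ = 0) :
    Tendsto (fun y => (f y - f y₀) / (y - y₀) ^ p) (𝓝[>] y₀)
      (𝓝 (iteratedDeriv p f y₀ / p.factorial)) := by
  obtain ⟨n, rfl⟩ : ∃ n, p = n + 1 := ⟨p - 1, (Nat.succ_pred_eq_of_pos hp1).symm⟩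
  have hfact : (0:ℝ) < (n+1).factorial := by positivity
  have hdifn : Differentiable ℝ (iteratedDeriv n f) :=
    hf.differentiable_iteratedDeriv n (by exact_mod_cast WithTop.coe_lt_top n)
  have hcont : Continuous (iteratedDeriv (n + 1) f) :=
    hf.continuous_iteratedDeriv _ (by exact_mod_cast le_top)
  rw [Metric.tendsto_nhdsWithin_nhds]
  intro ε hε
  obtain ⟨δ, hδ, hball⟩ := Metric.continuousAt_iff.mp (hcont.continuousAt (x := y₀))
    (ε * (n+1).factorial) (by positivity)
  refine ⟨δ, hδ, fun y hy hyd => ?_⟩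
  replace hy : y₀ < y := hy
  have hud : UniqueDiffOn ℝ (Icc y₀ y) := uniqueDiffOn_Icc hy
  have hcd : ContDiffOn ℝ n f (Icc y₀ y) := (hf.of_le (by exact_mod_cast le_top)).contDiffOn
  have hdiff : DifferentiableOn ℝ (iteratedDerivWithin n f (Icc y₀ y)) (Ioo y₀ y) := by
    refine (hdifn.differentiableOn).congr fun t ht => ?_
    exact idw_eq_id hf hud (Ioo_subset_Icc_self ht) n
  obtain ⟨ξ, hξ, heq⟩ := taylor_mean_remainder_lagrange hy.ne (by rwa [uIcc_of_le hy.le])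
    (by rwa [uIcc_of_le hy.le, uIoo_of_le hy.le])
  rw [uIcc_of_le hy.le] at heq
  rw [uIoo_of_le hy.le] at hξ
  have htay : taylorWithinEval f n (Icc y₀ y) y₀ y = f y₀ := by
    rw [taylor_within_apply, Finset.sum_eq_single 0]
    · simp
    · intro k hk hk0
      rw [idw_eq_id hf hud (left_mem_Icc.mpr hy.le) k,
        hder k (Nat.one_le_iff_ne_zero.mpr hk0) (Finset.mem_range.mp hk)]
      simp
    · intro h; exact absurd (Finset.mem_range.mpr (Nat.succ_pos n)) h
  rw [htay, idw_eq_id hf hud (Ioo_subset_Icc_self hξ) (n+1)] at heq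
  have hyne : (y - y₀) ^ (n + 1) ≠ 0 := pow_ne_zero _ (sub_ne_zero.mpr hy.ne')
  have hratio : (f y - f y₀) / (y - y₀) ^ (n+1) = iteratedDeriv (n+1) f ξ / (n+1).factorial := by
    rw [heq]; field_simp
  rw [hratio, Real.dist_eq, div_sub_div_same, abs_div, abs_of_pos hfact, div_lt_iff₀ hfact]
  have hξd : dist ξ y₀ < δ := by
    rw [Real.dist_eq] at hyd ⊢
    have h1 := hξ.1; have h2 := hξ.2
    rw [abs_of_pos (by linarith)]
    rw [abs_of_pos (by linarith)] at hyd
    linarith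
  have := hball hξd
  rwa [Real.dist_eq] at this

private lemma taylor_ratio {f : ℝ → ℝ} (hf : ContDiff ℝ (⊤ : ℕ∞) f) (y₀ : ℝ) (p : ℕ)
    (hp1 : 1 ≤ p) (hder : ∀ k, 1 ≤ k → k < p → iteratedDeriv k f y₀ = 0) :
    Tendsto (fun y => (f y - f y₀) / (y - y₀) ^ p) (𝓝[≠] y₀)
      (𝓝 (iteratedDeriv p f y₀ / p.factorial)) := by
  rw [← nhdsLT_sup_nhdsGT y₀, tendsto_sup]
  refine ⟨?_, taylor_ratio_right hf y₀ p hp1 hder⟩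
  set g : ℝ → ℝ := fun t => f (2 * y₀ - t) with hgdef
  have hgsm : ContDiff ℝ (⊤ : ℕ∞) g := hf.comp (contDiff_const.sub contDiff_id)
  have hgiter : ∀ k t, iteratedDeriv k g t = (-1 : ℝ) ^ k * iteratedDeriv k f (2 * y₀ - t) := by
    intro k t
    have h1 : g = fun x => (fun z => f (2 * y₀ + z)) (-x) := by
      funext u; simp [hgdef, sub_eq_add_neg]
    rw [h1, iteratedDeriv_comp_neg k (fun z => f (2 * y₀ + z)) t,
      iteratedDeriv_comp_const_add k f (2 * y₀)]
    simp [smul_eq_mul, sub_eq_add_neg]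
  have hg0 : g y₀ = f y₀ := by show f (2 * y₀ - y₀) = f y₀; norm_num [two_mul]
  have hgder : ∀ k, 1 ≤ k → k < p → iteratedDeriv k g y₀ = 0 := by
    intro k h1 h2
    rw [hgiter, show 2 * y₀ - y₀ = y₀ by ring, hder k h1 h2, mul_zero]
  have hgp : iteratedDeriv p g y₀ = (-1 : ℝ) ^ p * iteratedDeriv p f y₀ := by
    rw [hgiter, show 2 * y₀ - y₀ = y₀ by ring]
  have hright := taylor_ratio_right hgsm y₀ p hp1 hgder
  rw [hgp, hg0] at hright
  have hmap : Tendsto (fun y => 2 * y₀ - y) (𝓝[<] y₀) (𝓝[>] y₀) := by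
    rw [tendsto_nhdsWithin_iff]
    constructor
    · have h : Tendsto (fun y : ℝ => 2 * y₀ - y) (𝓝 y₀) (𝓝 (2 * y₀ - y₀)) :=
        (continuous_const.sub continuous_id).tendsto y₀
      rw [show 2 * y₀ - y₀ = y₀ by ring] at h
      exact h.mono_left nhdsWithin_le_nhds
    · exact eventually_mem_nhdsWithin.mono fun y (hy : y ∈ Iio y₀) => by
        simp only [mem_Ioi]; simp only [mem_Iio] at hy; linarith
  have hcomp := hright.comp hmap
  have hinv : ((-1 : ℝ) ^ p)⁻¹ = (-1 : ℝ) ^ p := by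
    rcases Nat.even_or_odd p with h | h
    · simp [h.neg_one_pow]
    · rw [h.neg_one_pow]; norm_num
  have hfun : ∀ y : ℝ, ((fun z => (g z - f y₀) / (z - y₀) ^ p) ∘ fun y => 2 * y₀ - y) y
      = (-1 : ℝ) ^ p * ((f y - f y₀) / (y - y₀) ^ p) := by
    intro y
    have h1 : g (2 * y₀ - y) = f y := by show f (2 * y₀ - (2 * y₀ - y)) = f y; norm_num
    simp only [Function.comp_apply, h1]
    rw [show 2 * y₀ - y - y₀ = -(y - y₀) by ring, neg_pow, mul_comm ((-1:ℝ)^p),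
      div_mul_eq_div_div, div_eq_mul_inv _ ((-1:ℝ)^p), hinv, mul_comm]
  rw [tendsto_congr hfun] at hcomp
  have hfinal := hcomp.const_mul ((-1 : ℝ) ^ p)
  have hsq : (-1 : ℝ) ^ p * (-1 : ℝ) ^ p = 1 := by
    rw [← mul_pow]; norm_num
  simp only [← mul_assoc, hsq, one_mul] at hfinal
  convert hfinal using 2
  rw [mul_div_assoc, ← mul_assoc, hsq, one_mul]

set_option maxHeartbeats 2000000 in
private lemma stmt13_pos (R : ℝ → ℝ) (hR : ContDiff ℝ (⊤ : ℕ∞) R) (G : ℝ → ℂ)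
    (hG : Continuous G)
    (y₀ c : ℝ) (p : ℕ) (hp : Odd p) (hp1 : 1 ≤ p)
    (hc : R y₀ = c)
    (hder : ∀ k, 1 ≤ k → k < p → iteratedDeriv k R y₀ = 0)
    (hdp : 0 < iteratedDeriv p R y₀) :
    ∃ ε > 0, ∃ δ > 0, ∃ Y : ℝ → ℝ,
      (∀ s : ℝ, s ≠ 0 → |s| < δ →
        R (Y s) = c + s ∧ |Y s - y₀| < ε ∧
        ∀ y, |y - y₀| < ε → R y = c + s → y = Y s) ∧
      Tendsto
        (fun s : ℝ => (G (Y s) / ((|deriv R (Y s)| : ℝ) : ℂ)) * (s : ℂ) /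
          (((Real.sign s * |s| ^ ((1 : ℝ) / p) : ℝ)) : ℂ))
        (nhdsWithin 0 {0}ᶜ)
        (nhds ((((p.factorial : ℝ) ^ ((1 : ℝ) / p) /
            (p * |iteratedDeriv p R y₀| ^ ((1 : ℝ) / p)) : ℝ) : ℂ) * G y₀)) := by
  classical
  have hpR : (0:ℝ) < p := by exact_mod_cast hp1
  have hpne : (p:ℝ) ≠ 0 := ne_of_gt hpR
  set a := iteratedDeriv p R y₀ with ha
  have hfact : (0:ℝ) < p.factorial := by positivity
  set α := a / p.factorial with hαdef
  have hαpos : 0 < α := div_pos hdp hfact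
  have hcontR : Continuous R := hR.continuous
  set F : ℝ → ℝ := fun y => (R y - c) / (y - y₀) ^ p with hFdef
  set Fd : ℝ → ℝ := fun y => deriv R y / (y - y₀) ^ (p - 1) with hFddef
  set e : ℝ := 1 - 1 / (p:ℝ) with hedef
  -- T2
  have T2 : Tendsto F (𝓝[≠] y₀) (𝓝 α) := by
    have h := taylor_ratio hR y₀ p hp1 hder
    rwa [hc] at h
  -- T3
  have T3 : Tendsto Fd (𝓝[≠] y₀) (𝓝 ((p:ℝ) * α)) := by
    rcases eq_or_lt_of_le hp1 with h1 | h2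
    · -- p = 1
      have hp1' : p = 1 := h1.symm
      subst hp1'
      have hRd : ContDiff ℝ (⊤:ℕ∞) (deriv R) := (contDiff_infty_iff_deriv.mp hR).2
      have hDa : deriv R y₀ = a := by rw [ha, iteratedDeriv_one]
      have hlim : Tendsto (deriv R) (𝓝[≠] y₀) (𝓝 a) := by
        rw [← hDa]
        exact (hRd.continuous.tendsto y₀).mono_left nhdsWithin_le_nhds
      have heq : Fd = deriv R := by
        funext y; simp [hFddef]
      rw [heq]
      have hval : (1:ℝ) * α = a := by
        rw [hαdef]; norm_num [Nat.factorial]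
      rw [show ((1:ℕ):ℝ) * α = a by push_cast; linarith [hval]]
      exact hlim
    · obtain ⟨q, rfl⟩ : ∃ q, p = q + 1 := ⟨p - 1, (Nat.succ_pred_eq_of_pos hp1).symm⟩
      have hq1 : 1 ≤ q := by omega
      have hRd : ContDiff ℝ (⊤:ℕ∞) (deriv R) := (contDiff_infty_iff_deriv.mp hR).2
      have hd0 : deriv R y₀ = 0 := by
        have h := hder 1 le_rfl (by omega)
        rwa [iteratedDeriv_one] at h
      have hd : ∀ k, 1 ≤ k → k < q → iteratedDeriv k (deriv R) y₀ = 0 := by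
        intro k hk1 hk2
        have h := hder (k+1) (by omega) (by omega)
        rwa [iteratedDeriv_succ'] at h
      have h := taylor_ratio hRd y₀ q hq1 hd
      rw [hd0] at h
      have hlim : iteratedDeriv q (deriv R) y₀ / q.factorial = ((q+1:ℕ):ℝ) * α := by
        rw [← iteratedDeriv_succ', hαdef, ← ha, Nat.factorial_succ]
        push_cast
        have hqf : (0:ℝ) < q.factorial := by positivity
        field_simp
      rw [hlim] at h
      simpa [hFddef, sub_zero, Nat.add_sub_cancel] using h
  have hev : Even (p - 1) := Nat.Odd.sub_odd hp odd_one
  -- positivity of deriv R near y₀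
  have hFdpos_ev : ∀ᶠ y in 𝓝[≠] y₀, 0 < Fd y :=
    T3.eventually (eventually_gt_nhds (by positivity))
  obtain ⟨ε₀, hε₀, hsub⟩ := Metric.mem_nhdsWithin_iff.mp hFdpos_ev
  have hderivpos : ∀ y, y ≠ y₀ → |y - y₀| < ε₀ → 0 < deriv R y := by
    intro y hy hlt
    have h1 : 0 < Fd y := hsub ⟨by rwa [Metric.mem_ball, Real.dist_eq], hy⟩
    have h2 : 0 < (y - y₀) ^ (p - 1) := hev.pow_pos (sub_ne_zero.mpr hy)
    have h3 := mul_pos h1 h2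
    rwa [hFddef, div_mul_cancel₀ _ (ne_of_gt h2)] at h3
  set ε : ℝ := ε₀ / 2 with hεdef
  have hε : 0 < ε := by positivity
  have hmono1 : StrictMonoOn R (Icc (y₀ - ε) y₀) := by
    apply strictMonoOn_of_deriv_pos (convex_Icc _ _) hcontR.continuousOn
    intro t ht
    rw [interior_Icc] at ht
    refine hderivpos t (ne_of_lt ht.2) ?_
    rw [abs_sub_lt_iff]
    constructor <;> [linarith [ht.2]; linarith [ht.1]]
  have hmono2 : StrictMonoOn R (Icc y₀ (y₀ + ε)) := by
    apply strictMonoOn_of_deriv_pos (convex_Icc _ _) hcontR.continuousOn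
    intro t ht
    rw [interior_Icc] at ht
    refine hderivpos t (ne_of_gt ht.1) ?_
    rw [abs_sub_lt_iff]
    constructor <;> [linarith [ht.2]; linarith [ht.1]]
  have hmono : StrictMonoOn R (Icc (y₀ - ε) (y₀ + ε)) := by
    intro x hx y hy hxy
    rcases le_or_gt y y₀ with h | h
    · exact hmono1 ⟨hx.1, by linarith [hxy]⟩ ⟨hy.1, h⟩ hxy
    rcases le_or_gt y₀ x with h' | h'
    · exact hmono2 ⟨h', hx.2⟩ ⟨by linarith, hy.2⟩ hxy
    · calc R x < R y₀ := hmono1 ⟨hx.1, h'.le⟩ ⟨by linarith, le_refl y₀⟩ h'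
        _ < R y := hmono2 ⟨le_refl y₀, by linarith⟩ ⟨h.le, hy.2⟩ h
  have hcl : R (y₀ - ε) < c := by
    have h := hmono1 ⟨le_refl _, by linarith⟩ ⟨by linarith, le_refl y₀⟩ (by linarith)
    rwa [hc] at h
  have hcr : c < R (y₀ + ε) := by
    have h := hmono2 ⟨le_refl y₀, by linarith⟩ ⟨by linarith, le_refl _⟩ (by linarith)
    rwa [hc] at h
  set δ : ℝ := min (R (y₀ + ε) - c) (c - R (y₀ - ε)) with hδdef
  have hδ : 0 < δ := lt_min (by linarith) (by linarith)
  have hex : ∀ s : ℝ, |s| < δ → ∃ y ∈ Ioo (y₀ - ε) (y₀ + ε), R y = c + s := by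
    intro s hs
    rw [abs_lt] at hs
    have h1 : c + s ∈ Ioo (R (y₀ - ε)) (R (y₀ + ε)) := by
      constructor
      · have := min_le_right (R (y₀ + ε) - c) (c - R (y₀ - ε)); linarith [hs.1]
      · have := min_le_left (R (y₀ + ε) - c) (c - R (y₀ - ε)); linarith [hs.2]
    obtain ⟨y, hy, hys⟩ := intermediate_value_Ioo (by linarith : y₀ - ε ≤ y₀ + ε)
      hcontR.continuousOn h1
    exact ⟨y, hy, hys⟩
  set Y : ℝ → ℝ := fun s =>
    if h : ∃ y ∈ Ioo (y₀ - ε) (y₀ + ε), R y = c + s then h.choose else y₀ with hYdef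
  have hYspec : ∀ s : ℝ, |s| < δ → Y s ∈ Ioo (y₀ - ε) (y₀ + ε) ∧ R (Y s) = c + s := by
    intro s hs
    have h := hex s hs
    simp only [hYdef, dif_pos h]
    exact ⟨h.choose_spec.1, h.choose_spec.2⟩
  have hIoo_abs : ∀ y : ℝ, y ∈ Ioo (y₀ - ε) (y₀ + ε) → |y - y₀| < ε := by
    intro y hy
    rw [abs_sub_lt_iff]
    exact ⟨by linarith [hy.2], by linarith [hy.1]⟩
  have huniq : ∀ s : ℝ, |s| < δ → ∀ y, |y - y₀| < ε → R y = c + s → y = Y s := by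
    intro s hs y hy hRy
    have h1 := hYspec s hs
    have hym : y ∈ Icc (y₀ - ε) (y₀ + ε) := by
      rw [abs_sub_lt_iff] at hy
      exact ⟨by linarith [hy.2], by linarith [hy.1]⟩
    have hYm : Y s ∈ Icc (y₀ - ε) (y₀ + ε) := ⟨h1.1.1.le, h1.1.2.le⟩
    exact hmono.injOn hym hYm (by rw [hRy, h1.2])
  -- T1
  have T1 : Tendsto Y (𝓝[≠] (0:ℝ)) (𝓝[≠] y₀) := by
    rw [Metric.tendsto_nhdsWithin_nhdsWithin]
    intro ε' hε'
    set ε₂ := min (ε' / 2) (ε / 2) with hε₂def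
    have hε₂ : 0 < ε₂ := lt_min (by linarith) (by linarith)
    have hε₂ε : ε₂ ≤ ε / 2 := min_le_right _ _
    have hε₂ε' : ε₂ ≤ ε' / 2 := min_le_left _ _
    have hupper : c < R (y₀ + ε₂) := by
      have h := hmono ⟨by linarith, by linarith⟩ ⟨by linarith, by linarith⟩
        (lt_add_of_pos_right y₀ hε₂)
      rwa [hc] at h
    have hlower : R (y₀ - ε₂) < c := by
      have h := hmono ⟨by linarith, by linarith⟩ ⟨by linarith, by linarith⟩
        (by linarith : y₀ - ε₂ < y₀)
      rwa [hc] at h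
    refine ⟨min δ (min (R (y₀ + ε₂) - c) (c - R (y₀ - ε₂))),
      lt_min hδ (lt_min (by linarith) (by linarith)), fun s hs hsd => ?_⟩
    rw [Real.dist_eq, sub_zero] at hsd
    have hsδ : |s| < δ := lt_of_lt_of_le hsd (min_le_left _ _)
    obtain ⟨hmem', hval'⟩ := hYspec s hsδ
    have habs2 : |s| < min (R (y₀ + ε₂) - c) (c - R (y₀ - ε₂)) :=
      lt_of_lt_of_le hsd (min_le_right _ _)
    rw [lt_min_iff, abs_lt, abs_lt] at habs2
    have hYm : Y s ∈ Icc (y₀ - ε) (y₀ + ε) := ⟨hmem'.1.le, hmem'.2.le⟩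
    have h1 : Y s < y₀ + ε₂ := by
      by_contra hcon
      push_neg at hcon
      have h := hmono.monotoneOn (⟨by linarith, by linarith⟩ : y₀ + ε₂ ∈ Icc (y₀ - ε) (y₀ + ε))
        hYm hcon
      rw [hval'] at h
      linarith [habs2.1.2]
    have h2 : y₀ - ε₂ < Y s := by
      by_contra hcon
      push_neg at hcon
      have h := hmono.monotoneOn hYm
        (⟨by linarith, by linarith⟩ : y₀ - ε₂ ∈ Icc (y₀ - ε) (y₀ + ε)) hcon
      rw [hval'] at h
      linarith [habs2.2.1]
    constructor
    · simp only [mem_compl_iff, mem_singleton_iff]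
      intro hY0
      rw [hY0, hc] at hval'
      exact hs (mem_singleton_iff.mpr (by linarith))
    · rw [Real.dist_eq, abs_sub_lt_iff]
      constructor <;> linarith
  -- eventual smallness
  have hsmall : ∀ᶠ s in 𝓝[≠] (0:ℝ), s ≠ 0 ∧ |s| < δ := by
    have h1 : ∀ᶠ s in 𝓝[≠] (0:ℝ), s ≠ 0 :=
      eventually_mem_nhdsWithin.mono fun s hs => hs
    have h2 : ∀ᶠ s in 𝓝 (0:ℝ), |s| < δ := by
      simpa using eventually_abs_sub_lt 0 hδ
    exact h1.and (h2.filter_mono nhdsWithin_le_nhds)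
  -- composed limits
  have hFY : Tendsto (fun s => F (Y s)) (𝓝[≠] (0:ℝ)) (𝓝 α) := T2.comp T1
  have hFdY : Tendsto (fun s => Fd (Y s)) (𝓝[≠] (0:ℝ)) (𝓝 ((p:ℝ) * α)) := T3.comp T1
  have hGY : Tendsto (fun s => G (Y s)) (𝓝[≠] (0:ℝ)) (𝓝 (G y₀)) :=
    (hG.tendsto y₀).comp (T1.mono_right nhdsWithin_le_nhds)
  -- key pointwise identity
  have hkey : ∀ᶠ s in 𝓝[≠] (0:ℝ),
      (G (Y s) / ((|deriv R (Y s)| : ℝ) : ℂ)) * (s : ℂ) /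
        (((Real.sign s * |s| ^ ((1 : ℝ) / p) : ℝ)) : ℂ)
      = G (Y s) * ((|F (Y s)| ^ e / |Fd (Y s)| : ℝ) : ℂ) := by
    filter_upwards [hsmall] with s hs
    obtain ⟨hs0, hsδ⟩ := hs
    obtain ⟨hmem', hval'⟩ := hYspec s hsδ
    set u := Y s - y₀ with hu
    have hYne : Y s ≠ y₀ := by
      intro h
      rw [h, hc] at hval'
      exact hs0 (by linarith)
    have hu0 : u ≠ 0 := sub_ne_zero.mpr hYne
    have habs : |u| < ε := hIoo_abs _ hmem'
    have hεε₀ : ε < ε₀ := by rw [hεdef]; linarith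
    have hdpos : 0 < deriv R (Y s) := hderivpos _ hYne (lt_trans habs hεε₀)
    have hsabs : 0 < |s| := abs_pos.mpr hs0
    -- basic decompositions
    have hFu : s = F (Y s) * u ^ p := by
      rw [hFdef]
      simp only
      rw [hval', add_sub_cancel_left, ← hu, div_mul_cancel₀ _ (pow_ne_zero _ hu0)]
    have hFdu : deriv R (Y s) = Fd (Y s) * u ^ (p - 1) := by
      rw [hFddef]
      simp only
      rw [← hu, div_mul_cancel₀ _ (pow_ne_zero _ hu0)]
    have hFdYpos : 0 < Fd (Y s) := by
      rw [hFddef]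
      exact div_pos hdpos (hev.pow_pos hu0)
    have hrpow_pos : (0:ℝ) < |s| ^ ((1:ℝ)/p) := Real.rpow_pos_of_pos hsabs _
    have hsign : Real.sign s * |s| ^ ((1:ℝ)/p) ≠ 0 := by
      rcases hs0.lt_or_gt with h | h
      · rw [Real.sign_of_neg h]; intro hcon; nlinarith
      · rw [Real.sign_of_pos h]; intro hcon; nlinarith
    -- complex to real
    have h1 : ((|deriv R (Y s)| : ℝ) : ℂ) ≠ 0 := by
      exact_mod_cast ne_of_gt (abs_pos.mpr (ne_of_gt hdpos))
    have h2 : (((Real.sign s * |s| ^ ((1:ℝ)/p) : ℝ)) : ℂ) ≠ 0 := by exact_mod_cast hsign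
    have hC : (G (Y s) / ((|deriv R (Y s)| : ℝ) : ℂ)) * (s : ℂ) /
        (((Real.sign s * |s| ^ ((1 : ℝ) / p) : ℝ)) : ℂ)
        = G (Y s) * ((s / (Real.sign s * |s| ^ ((1:ℝ)/p)) / |deriv R (Y s)| : ℝ) : ℂ) := by
      push_cast
      field_simp
    rw [hC]
    congr 1
    -- real identity
    have hd1 : s / (Real.sign s * |s| ^ ((1:ℝ)/p)) = |s| ^ e := by
      have habs_e : |s| ^ e = |s| / |s| ^ ((1:ℝ)/p) := by
        rw [hedef, Real.rpow_sub hsabs, Real.rpow_one]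
      rcases hs0.lt_or_gt with h | h
      · rw [Real.sign_of_neg h, habs_e, abs_of_neg h]
        rw [neg_one_mul, div_neg, ← neg_div]
      · rw [Real.sign_of_pos h, habs_e, abs_of_pos h, one_mul]
    rw [hd1]
    have hh1 : |s| = |F (Y s)| * |u| ^ p := by
      conv_lhs => rw [hFu]
      rw [abs_mul, abs_pow]
    have hh2 : |deriv R (Y s)| = |Fd (Y s)| * |u| ^ (p - 1) := by
      rw [hFdu, abs_mul, abs_pow]
    have hh3 : ((|u| ^ p : ℝ)) ^ e = |u| ^ (p - 1) := by
      rw [← Real.rpow_natCast |u| p, ← Real.rpow_mul (abs_nonneg u),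
        show (p:ℝ) * e = ((p - 1 : ℕ) : ℝ) by
          rw [Nat.cast_sub hp1, hedef]; push_cast; field_simp,
        Real.rpow_natCast]
    have hh4 : |s| ^ e = |F (Y s)| ^ e * |u| ^ (p - 1) := by
      rw [hh1, Real.mul_rpow (abs_nonneg _) (by positivity), hh3]
    rw [hh4, hh2, mul_div_mul_right _ _ (pow_ne_zero _ (ne_of_gt (abs_pos.mpr hu0)))]
  -- limits of the real factor
  have hconst : Tendsto (fun s => (|F (Y s)| ^ e / |Fd (Y s)| : ℝ)) (𝓝[≠] (0:ℝ))
      (𝓝 (α ^ e / ((p:ℝ) * α))) := by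
    have h1 : Tendsto (fun s => |F (Y s)|) (𝓝[≠] (0:ℝ)) (𝓝 |α|) := hFY.abs
    rw [abs_of_pos hαpos] at h1
    have h2 : Tendsto (fun s => |F (Y s)| ^ e) (𝓝[≠] (0:ℝ)) (𝓝 (α ^ e)) := h1.rpow_const (Or.inl (ne_of_gt hαpos))
    have h3 : Tendsto (fun s => |Fd (Y s)|) (𝓝[≠] (0:ℝ)) (𝓝 |(p:ℝ) * α|) := hFdY.abs
    rw [abs_of_pos (by positivity)] at h3
    exact h2.div h3 (by positivity)
  have hlim : Tendsto (fun s => G (Y s) * ((|F (Y s)| ^ e / |Fd (Y s)| : ℝ) : ℂ))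
      (𝓝[≠] (0:ℝ)) (𝓝 (G y₀ * ((α ^ e / ((p:ℝ) * α) : ℝ) : ℂ))) :=
    hGY.mul ((Complex.continuous_ofReal.tendsto _).comp hconst)
  have hfinal := Filter.Tendsto.congr' (Filter.EventuallyEq.symm hkey) hlim
  -- identify the constant
  have habs_a : |a| = a := abs_of_pos hdp
  have hαrpow : α ^ ((1:ℝ)/p) * (p.factorial:ℝ) ^ ((1:ℝ)/p) = a ^ ((1:ℝ)/p) := by
    rw [← Real.mul_rpow hαpos.le hfact.le]
    congr 1
    rw [hαdef]
    field_simp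
  have hCeq : α ^ e / ((p:ℝ) * α)
      = (p.factorial:ℝ) ^ ((1:ℝ)/p) / (p * a ^ ((1:ℝ)/p)) := by
    have h1 : α ^ e = α / α ^ ((1:ℝ)/p) := by
      rw [hedef, Real.rpow_sub hαpos, Real.rpow_one]
    have h2 : α ^ ((1:ℝ)/p) ≠ 0 := ne_of_gt (Real.rpow_pos_of_pos hαpos _)
    have h3 : (p.factorial:ℝ) ^ ((1:ℝ)/p) ≠ 0 := ne_of_gt (Real.rpow_pos_of_pos hfact _)
    rw [h1, ← hαrpow]
    field_simp
  refine ⟨ε, hε, δ, hδ, Y, ?_, ?_⟩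
  · intro s _ hsδ
    obtain ⟨hmem', hval'⟩ := hYspec s hsδ
    exact ⟨hval', hIoo_abs _ hmem', fun y hy hRy => huniq s hsδ y hy hRy⟩
  · rw [show ((((p.factorial : ℝ) ^ ((1 : ℝ) / p) /
        (p * |iteratedDeriv p R y₀| ^ ((1 : ℝ) / p)) : ℝ) : ℂ) * G y₀)
      = G y₀ * ((α ^ e / ((p:ℝ) * α) : ℝ) : ℂ) by
        rw [mul_comm]; congr 1; rw [← ha, habs_a]; exact Complex.ofReal_inj.mpr hCeq.symm]
    exact hfinal

/-- Near a stationary point `y₀` of odd order `p` with `R(y₀) = c`, for small `s ≠ 0`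
the equation `R(y) = c + s` has a unique solution `Y(s)` near `y₀`, and for smooth `G`
the function `φ(s) = G(Y(s))/|R'(Y(s))|` satisfies
`φ(s) ~ (p!)^{1/p} G(y₀) / (p |R⁽ᵖ⁾(y₀)|^{1/p}) · s^{1/p − 1}` as `s → 0`,
where `s^{1/p}` denotes the real `p`-th root (same sign as `s`). -/
theorem stmt13 (R : ℝ → ℝ) (hR : ContDiff ℝ (⊤ : ℕ∞) R) (G : ℝ → ℂ) (hG : ContDiff ℝ (⊤ : ℕ∞) G)
    (y₀ c : ℝ) (p : ℕ) (hp : Odd p) (hp1 : 1 ≤ p)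
    (hc : R y₀ = c)
    (hder : ∀ k, 1 ≤ k → k < p → iteratedDeriv k R y₀ = 0)
    (hdp : iteratedDeriv p R y₀ ≠ 0) :
    ∃ ε > 0, ∃ δ > 0, ∃ Y : ℝ → ℝ,
      (∀ s : ℝ, s ≠ 0 → |s| < δ →
        R (Y s) = c + s ∧ |Y s - y₀| < ε ∧
        ∀ y, |y - y₀| < ε → R y = c + s → y = Y s) ∧
      Tendsto
        (fun s : ℝ => (G (Y s) / ((|deriv R (Y s)| : ℝ) : ℂ)) * (s : ℂ) /
          (((Real.sign s * |s| ^ ((1 : ℝ) / p) : ℝ)) : ℂ))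
        (nhdsWithin 0 {0}ᶜ)
        (nhds ((((p.factorial : ℝ) ^ ((1 : ℝ) / p) /
            (p * |iteratedDeriv p R y₀| ^ ((1 : ℝ) / p)) : ℝ) : ℂ) * G y₀)) := by
  have hR' : ContDiff ℝ ((⊤:ℕ∞) : WithTop ℕ∞) R := hR.of_le (by simp)
  rcases hdp.lt_or_gt with hneg | hpos
  · -- negative leading coefficient : apply positive case to -R
    have hRneg : ContDiff ℝ ((⊤:ℕ∞) : WithTop ℕ∞) (fun y => -R y) := hR'.neg
    have hcneg : (fun y => -R y) y₀ = -c := by simp [hc]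
    have hderneg : ∀ k, 1 ≤ k → k < p → iteratedDeriv k (fun y => -R y) y₀ = 0 := by
      intro k h1 h2
      rw [iteratedDeriv_fun_neg, hder k h1 h2, neg_zero]
    have hdpneg : 0 < iteratedDeriv p (fun y => -R y) y₀ := by
      rw [iteratedDeriv_fun_neg]; linarith
    obtain ⟨ε, hε, δ, hδ, Z, hZ, htend⟩ := stmt13_pos (fun y => -R y) hRneg G
      hG.continuous y₀ (-c) p hp hp1 hcneg hderneg hdpneg
    refine ⟨ε, hε, δ, hδ, fun s => Z (-s), ?_, ?_⟩
    · intro s hs0 hsδ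
      obtain ⟨h1, h2, h3⟩ := hZ (-s) (neg_ne_zero.mpr hs0) (by rwa [abs_neg])
      refine ⟨by linarith, h2, ?_⟩
      intro y hy hRy
      exact h3 y hy (by show -R y = -c + -s; linarith)
    · have hnegmap : Tendsto (fun s : ℝ => -s) (𝓝[≠] (0:ℝ)) (𝓝[≠] (0:ℝ)) := by
        rw [tendsto_nhdsWithin_iff]
        constructor
        · simpa using (continuous_neg.tendsto (0:ℝ)).mono_left
            (nhdsWithin_le_nhds (s := {(0:ℝ)}ᶜ))
        · exact eventually_mem_nhdsWithin.mono fun s hs => by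
            simp only [mem_compl_iff, mem_singleton_iff] at hs ⊢
            simpa using hs
      have hcomp := htend.comp hnegmap
      have habsd : |iteratedDeriv p (fun y => -R y) y₀| = |iteratedDeriv p R y₀| := by
        rw [iteratedDeriv_fun_neg, abs_neg]
      rw [habsd] at hcomp
      refine hcomp.congr fun s => ?_
      simp only [Function.comp_apply]
      rw [show deriv (fun y => -R y) (Z (-s)) = -deriv R (Z (-s)) from deriv.neg,
        abs_neg, Real.sign_neg, abs_neg, neg_mul]
      push_cast
      rw [mul_neg, neg_div_neg_eq]
  · exact stmt13_pos R hR' G hG.continuous y₀ c p hp hp1 hc hder hpos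
end

section
/- Let R : ℝ → ℝ be smooth near y₀ and y₁ with R(y₀) = q², R(y₁) = r², and suppose at each of y₀, y₁ the lowest nonvanishing derivative of R has the same odd order p. Then there exist neighbourhoods U₀ ∋ y₀, U₁ ∋ y₁ and a smooth diffeomorphism h : U₀ → U₁ with h(y₀) = y₁ and R(h(y)) = R(y) − q² + r² for all y ∈ U₀. -/
open Set Real

open Filter Function Topology

/-- For `k ≥ 1`, subtracting a constant does not change iterated derivatives. -/
private lemma iteratedDeriv_sub_const' (f : ℝ → ℝ) (c : ℝ) {k : ℕ} (hk : 1 ≤ k) :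
    iteratedDeriv k (fun y => f y - c) = iteratedDeriv k f := by
  obtain ⟨m, rfl⟩ : ∃ m, k = m + 1 := ⟨k - 1, (Nat.succ_pred_eq_of_pos hk).symm⟩
  rw [iteratedDeriv_succ', iteratedDeriv_succ']
  have hd : (deriv fun y => f y - c) = deriv f := funext fun y => deriv_sub_const (f := f) c
  rw [hd]

/-- Leibniz at the base point for `(z - a) * u z`. -/
private lemma leib_sub_mul' (a : ℝ) : ∀ (k : ℕ) (u : ℝ → ℝ), ContDiff ℝ (⊤ : ℕ∞) u →
    iteratedDeriv (k + 1) (fun z => (z - a) * u z) a = ((k : ℝ) + 1) * iteratedDeriv k u a := by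
  have hd : ∀ u : ℝ → ℝ, ContDiff ℝ (⊤ : ℕ∞) u →
      deriv (fun z => (z - a) * u z) = fun z => u z + (z - a) * deriv u z := by
    intro u hu
    funext z
    have h1 : HasDerivAt (fun z => (z - a) * u z) (1 * u z + (z - a) * deriv u z) z :=
      ((hasDerivAt_id z).sub_const a).mul ((hu.differentiable (by simp)) z).hasDerivAt
    rw [h1.deriv]
    ring
  intro k
  induction k with
  | zero =>
    intro u hu
    rw [iteratedDeriv_one, hd u hu]
    simp
  | succ k ih =>
    intro u hu
    have hu' : ContDiff ℝ (⊤ : ℕ∞) (deriv u) := (contDiff_infty_iff_deriv.mp hu).2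
    rw [iteratedDeriv_succ', hd u hu]
    rw [iteratedDeriv_fun_add (f := u) (g := fun z => (z - a) * deriv u z)
      (contDiff_infty.mp hu _).contDiffAt
      (contDiff_infty.mp ((contDiff_id.sub contDiff_const).mul hu' :
        ContDiff ℝ (⊤ : ℕ∞) fun z => (z - a) * deriv u z) _).contDiffAt]
    rw [ih (deriv u) hu', ← iteratedDeriv_succ']
    push_cast
    ring

private lemma hasDerivAt_paramInt' (a : ℝ) (m : ℕ) (u : ℝ → ℝ) (hu : ContDiff ℝ (⊤ : ℕ∞) u)
    (z : ℝ) :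
    HasDerivAt (fun x => ∫ t in (0 : ℝ)..1, t ^ m * u (a + t * (x - a)))
      (∫ t in (0 : ℝ)..1, t ^ (m + 1) * deriv u (a + t * (z - a))) z := by
  have hud : Differentiable ℝ u := hu.differentiable (by simp)
  have hu'c : Continuous (deriv u) := hu.continuous_deriv (by simp)
  have huc : Continuous u := hu.continuous
  obtain ⟨C, hC⟩ := (isCompact_Icc : IsCompact (Icc (a - (|z - a| + 1)) (a + (|z - a| + 1)))).exists_bound_of_continuousOn
    hu'c.continuousOn
  have hC0 : 0 ≤ C := le_trans (norm_nonneg _) (hC a ⟨by linarith [abs_nonneg (z - a)], by linarith [abs_nonneg (z - a)]⟩)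
  have := intervalIntegral.hasDerivAt_integral_of_dominated_loc_of_deriv_le (μ := MeasureTheory.volume)
    (a := 0) (b := 1) (F := fun x t => t ^ m * u (a + t * (x - a)))
    (F' := fun x t => t ^ (m + 1) * deriv u (a + t * (x - a))) (x₀ := z) (bound := fun _ => C)
    (Metric.ball_mem_nhds z one_pos)
    (Eventually.of_forall fun x => (by fun_prop : Continuous fun t : ℝ => t ^ m * u (a + t * (x - a))).aestronglyMeasurable)
    ((by fun_prop : Continuous fun t : ℝ => t ^ m * u (a + t * (z - a))).intervalIntegrable 0 1)
    ((by fun_prop : Continuous fun t : ℝ => t ^ (m + 1) * deriv u (a + t * (z - a))).aestronglyMeasurable)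
    ?_ intervalIntegrable_const ?_
  · exact this.2
  · refine MeasureTheory.ae_of_all _ fun t ht x hx => ?_
    rw [Set.uIoc_of_le zero_le_one] at ht
    have hx' : |x - z| < 1 := by simpa [Real.dist_eq] using hx
    have ht0 : 0 < t := ht.1
    have ht1 : t ≤ 1 := ht.2
    have hmem : a + t * (x - a) ∈ Icc (a - (|z - a| + 1)) (a + (|z - a| + 1)) := by
      have h1 : |t * (x - a)| ≤ |z - a| + 1 := by
        rw [abs_mul, abs_of_pos ht0]
        have h2 : |x - a| ≤ |x - z| + |z - a| := by
          have := abs_add_le (x - z) (z - a); simpa using this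
        have h3 : t * |x - a| ≤ |x - a| := by nlinarith [abs_nonneg (x - a)]
        linarith
      constructor <;> linarith [abs_le.mp h1]
    rw [norm_mul, norm_pow, Real.norm_eq_abs t, abs_of_pos ht0]
    calc t ^ (m + 1) * ‖deriv u (a + t * (x - a))‖ ≤ 1 * C := by
          apply mul_le_mul (pow_le_one₀ ht0.le ht1) (hC _ hmem) (norm_nonneg _) zero_le_one
      _ = C := one_mul C
  · refine MeasureTheory.ae_of_all _ fun t _ x _ => ?_
    have hin : HasDerivAt (fun x => a + t * (x - a)) (t * 1) x :=
      (((hasDerivAt_id x).sub_const a).const_mul t).const_add a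
    have hc := ((hud (a + t * (x - a))).hasDerivAt.comp x hin).const_mul (t ^ m)
    exact hc.congr_deriv (by ring)

private lemma contDiff_paramInt' (a : ℝ) : ∀ n : ℕ, ∀ m : ℕ, ∀ u : ℝ → ℝ, ContDiff ℝ (⊤ : ℕ∞) u →
    ContDiff ℝ n (fun x => ∫ t in (0 : ℝ)..1, t ^ m * u (a + t * (x - a))) := by
  intro n
  induction n with
  | zero =>
    intro m u hu
    exact contDiff_zero.mpr (Differentiable.continuous fun z => (hasDerivAt_paramInt' a m u hu z).differentiableAt)
  | succ n ih =>
    intro m u hu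
    have hu' : ContDiff ℝ (⊤ : ℕ∞) (deriv u) := (contDiff_infty_iff_deriv.mp hu).2
    have hder : deriv (fun x => ∫ t in (0 : ℝ)..1, t ^ m * u (a + t * (x - a))) =
        fun z => ∫ t in (0 : ℝ)..1, t ^ (m + 1) * deriv u (a + t * (z - a)) :=
      funext fun z => (hasDerivAt_paramInt' a m u hu z).deriv
    push_cast
    refine contDiff_succ_iff_deriv.mpr ⟨fun z => (hasDerivAt_paramInt' a m u hu z).differentiableAt,
      fun h => absurd h (by simp), ?_⟩
    rw [hder]
    exact ih (m + 1) (deriv u) hu'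

private lemma hadamard' (a : ℝ) (F : ℝ → ℝ) (hF : ContDiff ℝ (⊤ : ℕ∞) F) (hFa : F a = 0) (z : ℝ) :
    F z = (z - a) * ∫ t in (0 : ℝ)..1, t ^ 0 * deriv F (a + t * (z - a)) := by
  have hFd : Differentiable ℝ F := hF.differentiable (by simp)
  have hFc : Continuous (deriv F) := hF.continuous_deriv (by simp)
  have key : ∫ t in (0 : ℝ)..1, (z - a) * deriv F (a + t * (z - a)) =
      F (a + 1 * (z - a)) - F (a + 0 * (z - a)) := by
    refine intervalIntegral.integral_eq_sub_of_hasDerivAt (f := fun t => F (a + t * (z - a))) (fun t _ => ?_)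
      ((by fun_prop : Continuous fun t : ℝ => (z - a) * deriv F (a + t * (z - a))).intervalIntegrable 0 1)
    have hin : HasDerivAt (fun t => a + t * (z - a)) (1 * (z - a)) t :=
      ((hasDerivAt_id t).mul_const (z - a)).const_add a
    have hc := (hFd (a + t * (z - a))).hasDerivAt.comp t hin
    exact hc.congr_deriv (by ring)
  simp only [pow_zero, one_mul]
  rw [← intervalIntegral.integral_const_mul, key]
  simp [hFa]

/-- Smooth factorization: `F z = (z - a) ^ p * g z` with `g` smooth and `g a ≠ 0`. -/
private lemma smooth_factor' (a : ℝ) : ∀ (p : ℕ) (F : ℝ → ℝ), ContDiff ℝ (⊤ : ℕ∞) F →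
    (∀ k, k < p → iteratedDeriv k F a = 0) → iteratedDeriv p F a ≠ 0 →
    ∃ g : ℝ → ℝ, ContDiff ℝ (⊤ : ℕ∞) g ∧ g a ≠ 0 ∧ ∀ z, F z = (z - a) ^ p * g z := by
  intro p
  induction p with
  | zero =>
    intro F hF _ hp
    exact ⟨F, hF, by simpa using hp, fun z => by simp⟩
  | succ p ih =>
    intro F hF hk hp
    set h : ℝ → ℝ := fun x => ∫ t in (0 : ℝ)..1, t ^ 0 * deriv F (a + t * (x - a)) with hhdef
    have hh : ContDiff ℝ (⊤ : ℕ∞) h :=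
      contDiff_infty.mpr fun n => contDiff_paramInt' a n 0 (deriv F) (contDiff_infty_iff_deriv.mp hF).2
    have hFz : ∀ z, F z = (z - a) * h z :=
      hadamard' a F hF (by simpa using hk 0 (by omega))
    have hFeq : F = fun z => (z - a) * h z := funext hFz
    have hlk : ∀ k : ℕ, iteratedDeriv (k + 1) F a = ((k : ℝ) + 1) * iteratedDeriv k h a := by
      intro k
      rw [hFeq]
      exact leib_sub_mul' a k h hh
    obtain ⟨g, hg, hga, hgeq⟩ := ih h hh
      (fun k hkp => by
        have := hk (k + 1) (by omega)
        rw [hlk] at this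
        exact (mul_eq_zero.mp this).resolve_left (by positivity))
      (by
        intro h0
        apply hp
        rw [hlk, h0, mul_zero])
    refine ⟨g, hg, hga, fun z => ?_⟩
    rw [hFz z, hgeq z]
    ring

/-- Odd real roots of a nonvanishing analytic function, locally. -/
private lemma oddroot' {p : ℕ} (hp : Odd p) {g : ℝ → ℝ} {a : ℝ}
    (hg : ContDiff ℝ (⊤ : ℕ∞) g) (hg0 : g a ≠ 0) :
    ∃ ψ : ℝ → ℝ, ψ a ≠ 0 ∧ ∀ᶠ y in 𝓝 a, ContDiffAt ℝ (⊤ : ℕ∞) ψ y ∧ ψ y ^ p = g y := by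
  have hp0 : p ≠ 0 := hp.pos.ne'
  rcases hg0.lt_or_gt with hneg | hpos
  · refine ⟨fun y => -((-g y) ^ ((p : ℝ)⁻¹)), ?_, ?_⟩
    · have : (0 : ℝ) < (-g a) ^ ((p : ℝ)⁻¹) := Real.rpow_pos_of_pos (by linarith) _
      exact neg_ne_zero.mpr this.ne'
    · have hev0 : ∀ᶠ y in 𝓝 a, 0 < -g y :=
        (hg.continuous.continuousAt.neg).eventually (eventually_gt_nhds (by linarith : (0:ℝ) < -g a))
      filter_upwards [hev0] with y hy
      constructor
      · exact ((hg.contDiffAt.neg).rpow_const_of_ne hy.ne').neg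
      · rw [hp.neg_pow, Real.rpow_inv_natCast_pow hy.le hp0, neg_neg]
  · refine ⟨fun y => (g y) ^ ((p : ℝ)⁻¹), ?_, ?_⟩
    · exact (Real.rpow_pos_of_pos hpos _).ne'
    · have hev0 : ∀ᶠ y in 𝓝 a, 0 < g y :=
        hg.continuous.continuousAt.eventually (eventually_gt_nhds hpos)
      filter_upwards [hev0] with y hy
      exact ⟨hg.contDiffAt.rpow_const_of_ne hy.ne',
        Real.rpow_inv_natCast_pow hy.le hp0⟩

/-- Construction of a local analytic `p`-th root `g` of `R - c²` near a point where the lowest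
nonvanishing derivative of `R` has odd order `p`, with nonvanishing derivative. -/
private lemma exists_root' (R : ℝ → ℝ) (hR : ContDiff ℝ (⊤ : ℕ∞) R) (a c : ℝ) (p : ℕ) (hp : Odd p)
    (h0 : R a = c ^ 2)
    (hder : ∀ k, 1 ≤ k → k < p → iteratedDeriv k R a = 0)
    (hdp : iteratedDeriv p R a ≠ 0) :
    ∃ (V : Set ℝ) (g : ℝ → ℝ), IsOpen V ∧ a ∈ V ∧ g a = 0 ∧
      ∀ y ∈ V, ContDiffAt ℝ (⊤ : ℕ∞) g y ∧ deriv g y ≠ 0 ∧ g y ^ p = R y - c ^ 2 := by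
  have hp1 : 1 ≤ p := hp.pos
  have hFan : ContDiff ℝ (⊤ : ℕ∞) (fun y => R y - c ^ 2) :=
    hR.sub contDiff_const
  have hF0 : R a - c ^ 2 = 0 := by rw [h0, sub_self]
  have hFder : ∀ k, 1 ≤ k → k < p → iteratedDeriv k (fun y => R y - c ^ 2) a = 0 := by
    intro k hk1 hkp
    rw [iteratedDeriv_sub_const' R (c ^ 2) hk1]
    exact hder k hk1 hkp
  have hFdp : iteratedDeriv p (fun y => R y - c ^ 2) a ≠ 0 := by
    rw [iteratedDeriv_sub_const' R (c ^ 2) hp1]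
    exact hdp
  obtain ⟨g, hgan, hg0, hev⟩ : ∃ g : ℝ → ℝ, ContDiff ℝ (⊤ : ℕ∞) g ∧ g a ≠ 0 ∧
      ∀ᶠ z in 𝓝 a, R z - c ^ 2 = (z - a) ^ p * g z := by
    obtain ⟨g, hg, hg0, hgeq⟩ := smooth_factor' a p _ hFan (fun k hk => by
      rcases Nat.eq_zero_or_pos k with rfl | hk1
      · simpa using hF0
      · exact hFder k hk1 hk) hFdp
    exact ⟨g, hg, hg0, Eventually.of_forall hgeq⟩
  obtain ⟨ψ, hψ0, hψev⟩ := oddroot' hp hgan hg0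
  set G : ℝ → ℝ := fun y => (y - a) * ψ y with hGdef
  have hψa : ContDiffAt ℝ (⊤ : ℕ∞) ψ a := (hψev.self_of_nhds).1
  have hda : HasDerivAt G (ψ a) a := by
    have h1 : HasDerivAt (fun y => y - a) 1 a := (hasDerivAt_id a).sub_const a
    have h2 : HasDerivAt ψ (deriv ψ a) a := (hψa.differentiableAt (by simp)).hasDerivAt
    have h3 : HasDerivAt (fun y => (y - a) * ψ y) (1 * ψ a + (a - a) * deriv ψ a) a := h1.mul h2
    simpa using h3
  have hGc : ∀ᶠ y in 𝓝 a, ContDiffAt ℝ (⊤ : ℕ∞) G y :=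
    hψev.mono fun y hy => (contDiffAt_id.sub contDiffAt_const).mul hy.1
  -- continuity of `deriv G` at `a` via analyticity on a neighbourhood
  have hcont : ContinuousAt (deriv G) a := by
    obtain ⟨W, hW1, hW2, hW3⟩ := eventually_nhds_iff.mp hGc
    have hGon : ContDiffOn ℝ (⊤ : ℕ∞) G W := fun y hy => (hW1 y hy).contDiffWithinAt
    exact (hGon.continuousOn_deriv_of_isOpen hW2 (by simp)).continuousAt (hW2.mem_nhds hW3)
  have hderivne : ∀ᶠ y in 𝓝 a, deriv G y ≠ 0 := by
    have hde : deriv G a = ψ a := hda.deriv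
    exact hcont.eventually_ne (hde ▸ hψ0)
  have hpow : ∀ᶠ y in 𝓝 a, G y ^ p = R y - c ^ 2 := by
    filter_upwards [hψev, hev] with y h1 h2
    rw [hGdef]
    simp only
    rw [mul_pow, h1.2, ← h2]
  obtain ⟨V, hV1, hV2, hV3⟩ := eventually_nhds_iff.mp (hGc.and (hderivne.and hpow))
  exact ⟨V, G, hV2, hV3, by simp [hGdef], fun y hy =>
    ⟨(hV1 y hy).1, (hV1 y hy).2.1, (hV1 y hy).2.2⟩⟩

/-- Local smooth (analytic) inverse of a function with nonvanishing derivative near a point. -/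
private lemma exists_inverse' {f : ℝ → ℝ} {S : Set ℝ} {a : ℝ} (hS : IsOpen S) (ha : a ∈ S)
    (hf : ∀ x ∈ S, ContDiffAt ℝ (⊤ : ℕ∞) f x ∧ deriv f x ≠ 0) :
    ∃ (U T : Set ℝ) (finv : ℝ → ℝ), IsOpen U ∧ IsOpen T ∧ a ∈ U ∧ U ⊆ S ∧
      ContDiffOn ℝ (⊤ : ℕ∞) f U ∧ ContDiffOn ℝ (⊤ : ℕ∞) finv T ∧
      (∀ x ∈ U, f x ∈ T ∧ finv (f x) = x) ∧ (∀ z ∈ T, finv z ∈ U ∧ f (finv z) = z) := by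
  have hfa := (hf a ha).1
  have hda : HasDerivAt f (deriv f a) a := (hfa.differentiableAt (by simp)).hasDerivAt
  set e := hfa.toOpenPartialHomeomorph f (hda.hasFDerivAt_equiv (hf a ha).2) (by simp) with he
  have hec : ⇑e = f := rfl
  have hsa : a ∈ e.source := hfa.mem_toOpenPartialHomeomorph_source _ _
  set U : Set ℝ := e.source ∩ S with hU
  have hUo : IsOpen U := e.open_source.inter hS
  set T : Set ℝ := e.target ∩ e.symm ⁻¹' U with hT
  have hTo : IsOpen T := e.isOpen_inter_preimage_symm hUo
  have hfwd : ∀ x ∈ U, f x ∈ T ∧ e.symm (f x) = x := by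
    intro x hx
    have hmap : f x ∈ e.target := by rw [← hec]; exact e.map_source hx.1
    have hli : e.symm (f x) = x := by rw [← hec]; exact e.left_inv hx.1
    exact ⟨⟨hmap, by rw [Set.mem_preimage, hli]; exact hx⟩, hli⟩
  have hbwd : ∀ z ∈ T, e.symm z ∈ U ∧ f (e.symm z) = z := by
    intro z hz
    refine ⟨hz.2, ?_⟩
    rw [← hec]
    exact e.right_inv hz.1
  refine ⟨U, T, e.symm, hUo, hTo, ⟨hsa, ha⟩, fun x hx => hx.2,
    fun x hx => (hf x hx.2).1.contDiffWithinAt, ?_, hfwd, hbwd⟩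
  intro z hz
  have hxU : e.symm z ∈ U := hz.2
  have hfx := (hf _ hxU.2).1
  have hdx : HasDerivAt f (deriv f (e.symm z)) (e.symm z) :=
    (hfx.differentiableAt (by simp)).hasDerivAt
  exact (e.contDiffAt_symm_deriv (hf _ hxU.2).2 hz.1 hdx hfx).contDiffWithinAt

/-- Construction of the observable-building diffeomorphism `h` of Appendix C: if the
lowest nonvanishing derivative of the smooth function `R` at `y₀` and at `y₁` has the
same odd order `p`, with `R(y₀) = q²` and `R(y₁) = r²`, then there are neighbourhoods
`U₀ ∋ y₀`, `U₁ ∋ y₁` and a smooth diffeomorphism `h : U₀ → U₁` with `h(y₀) = y₁` and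
`R(h(y)) = R(y) − q² + r²` on `U₀`. -/
theorem stmt19 (R : ℝ → ℝ) (hR : ContDiff ℝ (⊤ : ℕ∞) R)
    (y₀ y₁ q r : ℝ) (p : ℕ) (hp : Odd p)
    (h0 : R y₀ = q ^ 2) (h1 : R y₁ = r ^ 2)
    (hder0 : ∀ k, 1 ≤ k → k < p → iteratedDeriv k R y₀ = 0)
    (hdp0 : iteratedDeriv p R y₀ ≠ 0)
    (hder1 : ∀ k, 1 ≤ k → k < p → iteratedDeriv k R y₁ = 0)
    (hdp1 : iteratedDeriv p R y₁ ≠ 0) :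
    ∃ U₀ U₁ : Set ℝ, IsOpen U₀ ∧ IsOpen U₁ ∧ y₀ ∈ U₀ ∧ y₁ ∈ U₁ ∧
      ∃ h hinv : ℝ → ℝ, ContDiffOn ℝ (⊤ : ℕ∞) h U₀ ∧ ContDiffOn ℝ (⊤ : ℕ∞) hinv U₁ ∧
        (∀ y ∈ U₀, h y ∈ U₁ ∧ hinv (h y) = y) ∧
        (∀ z ∈ U₁, hinv z ∈ U₀ ∧ h (hinv z) = z) ∧
        h y₀ = y₁ ∧ ∀ y ∈ U₀, R (h y) = R y - q ^ 2 + r ^ 2 := by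
  obtain ⟨V₀, g₀, hV₀o, haV₀, hg₀a, hV₀⟩ := exists_root' R hR y₀ q p hp h0 hder0 hdp0
  obtain ⟨V₁, g₁, hV₁o, haV₁, hg₁a, hV₁⟩ := exists_root' R hR y₁ r p hp h1 hder1 hdp1
  obtain ⟨U₀', T₀, M, hU₀'o, hT₀o, hy₀U, hU₀S, hg₀c, hMc, hfwd₀, hbwd₀⟩ :=
    exists_inverse' hV₀o haV₀ (fun x hx => ⟨(hV₀ x hx).1, (hV₀ x hx).2.1⟩)
  obtain ⟨U₁', T₁, N, hU₁'o, hT₁o, hy₁U, hU₁S, hg₁c, hNc, hfwd₁, hbwd₁⟩ :=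
    exists_inverse' hV₁o haV₁ (fun x hx => ⟨(hV₁ x hx).1, (hV₁ x hx).2.1⟩)
  set T : Set ℝ := T₀ ∩ T₁ with hTdef
  set U₀ : Set ℝ := U₀' ∩ g₀ ⁻¹' T with hU₀def
  set U₁ : Set ℝ := U₁' ∩ g₁ ⁻¹' T with hU₁def
  have hTo : IsOpen T := hT₀o.inter hT₁o
  have hU₀o : IsOpen U₀ := hg₀c.continuousOn.isOpen_inter_preimage hU₀'o hTo
  have hU₁o : IsOpen U₁ := hg₁c.continuousOn.isOpen_inter_preimage hU₁'o hTo
  have h0T₀ : (0 : ℝ) ∈ T₀ := by have := (hfwd₀ y₀ hy₀U).1; rwa [hg₀a] at this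
  have h0T₁ : (0 : ℝ) ∈ T₁ := by have := (hfwd₁ y₁ hy₁U).1; rwa [hg₁a] at this
  have hy₀ : y₀ ∈ U₀ := ⟨hy₀U, by rw [Set.mem_preimage, hg₀a]; exact ⟨h0T₀, h0T₁⟩⟩
  have hy₁ : y₁ ∈ U₁ := ⟨hy₁U, by rw [Set.mem_preimage, hg₁a]; exact ⟨h0T₀, h0T₁⟩⟩
  refine ⟨U₀, U₁, hU₀o, hU₁o, hy₀, hy₁, fun y => N (g₀ y), fun z => M (g₁ z), ?_, ?_, ?_, ?_, ?_, ?_⟩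
  · exact (hNc.comp (hg₀c.mono Set.inter_subset_left)
      (fun y hy => hy.2.2 : U₀ ⊆ g₀ ⁻¹' T₁))
  · exact (hMc.comp (hg₁c.mono Set.inter_subset_left)
      (fun z hz => hz.2.1 : U₁ ⊆ g₁ ⁻¹' T₀))
  · intro y hy
    have hNy := hbwd₁ (g₀ y) hy.2.2
    constructor
    · exact ⟨hNy.1, by rw [Set.mem_preimage, hNy.2]; exact hy.2⟩
    · show M (g₁ (N (g₀ y))) = y
      rw [hNy.2]
      exact (hfwd₀ y hy.1).2
  · intro z hz
    have hMz := hbwd₀ (g₁ z) hz.2.1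
    constructor
    · exact ⟨hMz.1, by rw [Set.mem_preimage, hMz.2]; exact hz.2⟩
    · show N (g₀ (M (g₁ z))) = z
      rw [hMz.2]
      exact (hfwd₁ z hz.1).2
  · show N (g₀ y₀) = y₁
    rw [hg₀a, ← hg₁a]
    exact (hfwd₁ y₁ hy₁U).2
  · intro y hy
    show R (N (g₀ y)) = R y - q ^ 2 + r ^ 2
    have hNy := hbwd₁ (g₀ y) hy.2.2
    have e1 : g₁ (N (g₀ y)) ^ p = R (N (g₀ y)) - r ^ 2 := (hV₁ _ (hU₁S hNy.1)).2.2
    have e0 : g₀ y ^ p = R y - q ^ 2 := (hV₀ y (hU₀S hy.1)).2.2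
    rw [hNy.2, e0] at e1
    linarith
end
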